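/- Let A be a central arrangement of rank r. Suppose B ⊆ A consists of exactly r hyperplanes with r(∩_{H∈B} H) = r and lc(B) = A (i.e. B is an lc-basis of A). Then A is combinatorially formal. -/

import Mathlib

open Submodule

section ArrangementBasics

variable {𝕂 : Type*} [Field 𝕂] {V : Type*} [AddCommGroup V] [Module 𝕂 V]

/-- `H` is a (linear) hyperplane: the kernel of a nonzero linear form. -/
def IsHyperplane (H : Submodule 𝕂 V) : Prop :=
  ∃ f : Module.Dual 𝕂 V, f ≠ 0 ∧ LinearMap.ker f = H

/-- A central arrangement: a finite set of linear hyperplanes. -/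
def IsArrangement (A : Set (Submodule 𝕂 V)) : Prop :=
  A.Finite ∧ ∀ H ∈ A, IsHyperplane H

/-- The intersection lattice `L(A)`: all intersections of subsets of `A`
(with the ambient space `⊤ = sInf ∅` included). -/
def interLattice (A : Set (Submodule 𝕂 V)) : Set (Submodule 𝕂 V) :=
  {X | ∃ B ⊆ A, X = sInf B}

/-- The rank of an intersection: its codimension in the ambient space. -/
noncomputable def rk (X : Submodule 𝕂 V) : ℕ := Module.finrank 𝕂 (V ⧸ X)

/-- The localization `A_X` of `A` at `X`: all hyperplanes of `A` containing `X`. -/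
def locz (A : Set (Submodule 𝕂 V)) (X : Submodule 𝕂 V) : Set (Submodule 𝕂 V) :=
  {H | H ∈ A ∧ X ≤ H}

/-- The restriction `A^Z` of `A` to `Z`, an arrangement in (the vector space) `Z`:
the subspaces `Z ∩ H` for `H ∈ A ∖ A_Z`, viewed as submodules of `Z`. -/
def restr (A : Set (Submodule 𝕂 V)) (Z : Submodule 𝕂 V) : Set (Submodule 𝕂 ↥Z) :=
  {K | ∃ H ∈ A, ¬ Z ≤ H ∧ K = (Z ⊓ H).comap Z.subtype}

/-- `α` is a choice of defining linear forms for the arrangement `A`. -/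
def IsDefiningForms (A : Set (Submodule 𝕂 V)) (α : Submodule 𝕂 V → Module.Dual 𝕂 V) : Prop :=
  ∀ H ∈ A, LinearMap.ker (α H) = H

/-- The relation space `F(A)` with respect to the chosen defining forms `α`:
the kernel of `⊕_{H ∈ A} 𝕂·e_H → V*`, `e_H ↦ α_H`, realized as the space of finitely
supported coefficient functions supported on `A` whose linear combination vanishes. -/
noncomputable def relSpace (A : Set (Submodule 𝕂 V)) (α : Submodule 𝕂 V → Module.Dual 𝕂 V) :
    Submodule 𝕂 (Submodule 𝕂 V →₀ 𝕂) :=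
  Finsupp.supported 𝕂 𝕂 A ⊓ LinearMap.ker (Finsupp.linearCombination 𝕂 α)

/-- `F_2(A)`: the span of the elements of `F(A)` of length at most `3`. -/
noncomputable def relSpace2 (A : Set (Submodule 𝕂 V)) (α : Submodule 𝕂 V → Module.Dual 𝕂 V) :
    Submodule 𝕂 (Submodule 𝕂 V →₀ 𝕂) :=
  Submodule.span 𝕂 {c | c ∈ relSpace A α ∧ c.support.card ≤ 3}

/-- `A` is formal if `F_2(A) = F(A)` (for any choice of defining forms). -/
def IsFormal (A : Set (Submodule 𝕂 V)) : Prop :=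
  ∀ α : Submodule 𝕂 V → Module.Dual 𝕂 V,
    IsDefiningForms A α → relSpace2 A α = relSpace A α

end ArrangementBasics


section LineClosure

variable {𝕂 : Type*} [Field 𝕂] {V : Type*} [AddCommGroup V] [Module 𝕂 V]

/-- A subset `B` of the arrangement `A` is line-closed if for every pair
`H, H' ∈ B` one has `A_{H ∩ H'} ⊆ B`. -/
def IsLineClosed (A B : Set (Submodule 𝕂 V)) : Prop :=
  B ⊆ A ∧ ∀ H ∈ B, ∀ H' ∈ B, locz A (H ⊓ H') ⊆ B

/-- The line closure `lc(B)` of `B` in `A`: the intersection of all line-closed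
subsets of `A` containing `B`. -/
def lineClosure (A B : Set (Submodule 𝕂 V)) : Set (Submodule 𝕂 V) :=
  ⋂₀ {C | IsLineClosed A C ∧ B ⊆ C}

end LineClosure

/-- `A` is combinatorially formal: every central arrangement (over any field, in any
finite-dimensional space) whose intersection lattice is isomorphic (as a poset) to
that of `A` is formal. -/
def IsCombinatoriallyFormal {𝕂 : Type*} [Field 𝕂] {V : Type*} [AddCommGroup V] [Module 𝕂 V]
    (A : Set (Submodule 𝕂 V)) : Prop :=
  ∀ (𝕂' : Type) [Field 𝕂'] (ℓ' : ℕ) (B : Set (Submodule 𝕂' (Fin ℓ' → 𝕂'))),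
    IsArrangement B →
    Nonempty (↥(interLattice A) ≃o ↥(interLattice B)) →
    IsFormal B

/-!
An lc-basis `B` is independent: no hyperplane of `B` contains the intersection of the others.
Fix defining forms `α` and let `M` be `F₂(A)` plus the span of the `e_H`, `H ∈ B`. If
`H ∩ H' ⊆ K`, then `α_K = a α_H + b α_{H'}`, a relation of length three, so the hyperplanes `H`
with `e_H ∈ M` form a line-closed set containing `B`, hence all of `A`. Thus every relation is
an element of `F₂(A)` plus a relation supported on `B`, and the latter vanishes by independence.

Independence and line closure are expressed through meets of hyperplanes, and the hyperplanes
are the coatoms of `L(A)`; so an isomorphism `L(A) ≃ L(A')` carries `B` to an independent set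
whose line closure is `A'`, and `A'` is formal by the same argument.
-/

section

variable {𝕂 : Type*} [Field 𝕂] {V : Type*} [AddCommGroup V] [Module 𝕂 V]

section Rank

lemma rk_top : rk (⊤ : Submodule 𝕂 V) = 0 :=
  Module.finrank_zero_of_subsingleton

variable [FiniteDimensional 𝕂 V]

lemma rk_inf_le_rk_add_one (X : Submodule 𝕂 V) {H : Submodule 𝕂 V} (hH : IsHyperplane H) :
    rk (X ⊓ H) ≤ rk X + 1 := by
  obtain ⟨f, hf, rfl⟩ := hH
  -- Grassmann's formula for `X` and `ker f`, where `ker f` has codimension one.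
  have hsup := Submodule.finrank_sup_add_finrank_inf_eq X (LinearMap.ker f)
  have hker := Module.Dual.finrank_ker_add_one_of_ne_zero hf
  have hle := Submodule.finrank_le (X ⊔ LinearMap.ker f)
  have hquot₁ := Submodule.finrank_quotient_add_finrank (X ⊓ LinearMap.ker f)
  have hquot₂ := Submodule.finrank_quotient_add_finrank X
  unfold rk
  omega

lemma rk_sInf_le_ncard {S : Set (Submodule 𝕂 V)} (hS : S.Finite)
    (hyp : ∀ H ∈ S, IsHyperplane H) : rk (sInf S) ≤ S.ncard := by
  induction S, hS using Set.Finite.induction_on with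
  | empty => simp [rk_top]
  | @insert H S hHS hS ih =>
    rw [sInf_insert, Set.ncard_insert_of_notMem hHS hS, inf_comm]
    have hrkS := ih fun K hK ↦ hyp K (Set.mem_insert_of_mem _ hK)
    have hstep := rk_inf_le_rk_add_one (sInf S) (hyp H (Set.mem_insert _ _))
    omega

end Rank

def IsIndependent (B : Set (Submodule 𝕂 V)) : Prop :=
  ∀ H ∈ B, ¬ sInf (B \ {H}) ≤ H

lemma isIndependent_of_rk_sInf_eq_ncard [FiniteDimensional 𝕂 V] {B : Set (Submodule 𝕂 V)}
    (hB : B.Finite) (hyp : ∀ H ∈ B, IsHyperplane H) (hrk : rk (sInf B) = B.ncard) :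
    IsIndependent B := by
  intro H hH hle
  have heq : sInf (B \ {H}) = sInf B := by
    refine le_antisymm (le_sInf fun K hK ↦ ?_) (sInf_le_sInf Set.sdiff_subset)
    obtain rfl | hKH := eq_or_ne K H
    · exact hle
    · exact sInf_le ⟨hK, hKH⟩
  have hrk' := rk_sInf_le_ncard (S := B \ {H}) hB.sdiff fun K hK ↦ hyp K hK.1
  have hpos : 0 < B.ncard := (Set.ncard_pos hB).2 ⟨H, hH⟩
  rw [heq, hrk, Set.ncard_sdiff_singleton_of_mem hH] at hrk'
  omega

lemma isLineClosed_self (A : Set (Submodule 𝕂 V)) : IsLineClosed A A :=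
  ⟨subset_rfl, fun _ _ _ _ _ hK ↦ hK.1⟩

lemma lineClosure_subset {A B T : Set (Submodule 𝕂 V)} (hT : IsLineClosed A T) (hBT : B ⊆ T) :
    lineClosure A B ⊆ T :=
  Set.sInter_subset_of_mem ⟨hT, hBT⟩

section Formal

variable {C B : Set (Submodule 𝕂 V)} {α : Submodule 𝕂 V → Module.Dual 𝕂 V}

lemma exists_smul_add_smul_eq_of_ker_inf_ker_le {f g h : Module.Dual 𝕂 V}
    (hle : LinearMap.ker f ⊓ LinearMap.ker g ≤ LinearMap.ker h) :
    ∃ a b : 𝕂, a • f + b • g = h := by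
  have hker : ⨅ i, LinearMap.ker (![g, f] i) ≤ LinearMap.ker h := fun v hv ↦
    hle ⟨mem_iInf _ |>.1 hv 1, mem_iInf _ |>.1 hv 0⟩
  simpa [Matrix.range_cons, mem_span_pair] using mem_span_of_iInf_ker_le_ker hker

lemma IsIndependent.eq_zero_of_linearCombination_eq_zero (hB : IsIndependent B) (hBC : B ⊆ C)
    (hα : IsDefiningForms C α) {b : Submodule 𝕂 V →₀ 𝕂}
    (hb : b ∈ Finsupp.supported 𝕂 𝕂 B)
    (hb₀ : Finsupp.linearCombination 𝕂 α b = 0) : b = 0 := by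
  by_contra hne
  obtain ⟨H, hH⟩ := Finsupp.support_nonempty_iff.2 hne
  refine hB H (hb hH) fun v hv ↦ ?_
  have hvanish : ∀ K ∈ b.support, K ≠ H → α K v = 0 := fun K hK hKH ↦ by
    rw [← LinearMap.mem_ker, hα K (hBC (hb hK))]
    exact mem_sInf.1 hv K ⟨hb hK, hKH⟩
  have heval : Finsupp.linearCombination 𝕂 α b v = b H * α H v := by
    rw [Finsupp.linearCombination_apply, Finsupp.sum, LinearMap.sum_apply,
      Finset.sum_eq_single_of_mem H hH fun K hK hKH ↦ by simp [hvanish K hK hKH]]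
    rfl
  rw [hb₀, LinearMap.zero_apply, eq_comm, mul_eq_zero] at heval
  rw [← hα H (hBC (hb hH)), LinearMap.mem_ker]
  exact heval.resolve_left (Finsupp.mem_support_iff.1 hH)

lemma exists_single_sub_single_sub_single_mem_relSpace2 (hα : IsDefiningForms C α)
    {H H' K : Submodule 𝕂 V} (hH : H ∈ C) (hH' : H' ∈ C) (hK : K ∈ C) (hle : H ⊓ H' ≤ K) :
    ∃ a b : 𝕂,
      Finsupp.single K 1 - Finsupp.single H a - Finsupp.single H' b ∈ relSpace2 C α := by
  classical
  obtain ⟨a, b, hab⟩ := exists_smul_add_smul_eq_of_ker_inf_ker_le (h := α K)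
    (by rwa [hα H hH, hα H' hH', hα K hK] : LinearMap.ker (α H) ⊓ LinearMap.ker (α H') ≤ _)
  set ρ := Finsupp.single K 1 - Finsupp.single H a - Finsupp.single H' b
  have hsupp : ρ.support ⊆ {K, H, H'} := fun x hx ↦ by
    contrapose! hx
    simp only [Finset.mem_insert, Finset.mem_singleton, not_or] at hx
    simp [ρ, Ne.symm hx.1, Ne.symm hx.2.1, Ne.symm hx.2.2]
  refine ⟨a, b, subset_span
    ⟨⟨fun x hx ↦ ?_, ?_⟩, (Finset.card_le_card hsupp).trans Finset.card_le_three⟩⟩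
  · have hx' := hsupp hx
    simp only [Finset.mem_insert, Finset.mem_singleton] at hx'
    rcases hx' with rfl | rfl | rfl <;> assumption
  · simp [← hab]

lemma isLineClosed_setOf_single_mem (hα : IsDefiningForms C α)
    {M : Submodule 𝕂 (Submodule 𝕂 V →₀ 𝕂)} (hM : relSpace2 C α ≤ M) :
    IsLineClosed C {H | H ∈ C ∧ Finsupp.single H 1 ∈ M} := by
  refine ⟨fun H hH ↦ hH.1, ?_⟩
  rintro H ⟨hHC, hHM⟩ H' ⟨hH'C, hH'M⟩ K ⟨hKC, hle⟩
  obtain ⟨a, b, hρ⟩ := exists_single_sub_single_sub_single_mem_relSpace2 hα hHC hH'C hKC hle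
  have hHa : Finsupp.single H a ∈ M := Finsupp.smul_single_one H a ▸ M.smul_mem a hHM
  have hH'b : Finsupp.single H' b ∈ M := Finsupp.smul_single_one H' b ▸ M.smul_mem b hH'M
  refine ⟨hKC, ?_⟩
  simpa only [sub_add_cancel] using M.add_mem (M.add_mem (hM hρ) hH'b) hHa

lemma relSpace_le_supported_sup_relSpace2 (hBC : B ⊆ C) (hlc : lineClosure C B = C)
    (hα : IsDefiningForms C α) :
    relSpace C α ≤ Finsupp.supported 𝕂 𝕂 B ⊔ relSpace2 C α := by
  set M := Finsupp.supported 𝕂 𝕂 B ⊔ relSpace2 C α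
  have hCM : C ⊆ {H | H ∈ C ∧ Finsupp.single H 1 ∈ M} := by
    refine hlc.symm.subset.trans <|
      lineClosure_subset (isLineClosed_setOf_single_mem hα le_sup_right) fun H hH ↦
        ⟨hBC hH, mem_sup_left (Finsupp.single_mem_supported 𝕂 1 hH)⟩
  calc relSpace C α ≤ Finsupp.supported 𝕂 𝕂 C := inf_le_left
    _ ≤ M := by
      rw [Finsupp.supported_eq_span_single, span_le]
      rintro _ ⟨H, hH, rfl⟩
      exact (hCM hH).2

theorem IsIndependent.isFormal_of_lineClosure_eq (hB : IsIndependent B) (hBC : B ⊆ C)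
    (hlc : lineClosure C B = C) : IsFormal C := by
  intro α hα
  refine le_antisymm (span_le.2 fun c hc ↦ hc.1) fun c hc ↦ ?_
  obtain ⟨b, hb, f, hf, rfl⟩ := mem_sup.1 (relSpace_le_supported_sup_relSpace2 hBC hlc hα hc)
  have hfrel : f ∈ relSpace C α := span_le.2 (fun c hc ↦ hc.1) hf
  have hb₀ : Finsupp.linearCombination 𝕂 α b = 0 := by
    simpa [LinearMap.mem_ker.1 hfrel.2] using hc.2
  rwa [hB.eq_zero_of_linearCombination_eq_zero hBC hα hb hb₀, zero_add]

end Formal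

section Transfer

variable {𝕂' : Type*} [Field 𝕂'] {V' : Type*} [AddCommGroup V'] [Module 𝕂' V']
variable {A : Set (Submodule 𝕂 V)} {C : Set (Submodule 𝕂' V')}

lemma IsHyperplane.isCoatom {H : Submodule 𝕂 V} (hH : IsHyperplane H) : IsCoatom H := by
  obtain ⟨f, hf, rfl⟩ := hH
  exact LinearMap.isCoatom_ker_of_surjective (LinearMap.surjective_of_ne_zero hf)

lemma subset_interLattice (A : Set (Submodule 𝕂 V)) : A ⊆ interLattice A :=
  fun H hH ↦ ⟨{H}, Set.singleton_subset_iff.2 hH, sInf_singleton.symm⟩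

lemma top_mem_interLattice (A : Set (Submodule 𝕂 V)) : ⊤ ∈ interLattice A :=
  ⟨∅, Set.empty_subset A, sInf_empty.symm⟩

lemma sInf_mem_interLattice {S : Set (Submodule 𝕂 V)} (hS : S ⊆ interLattice A) :
    sInf S ∈ interLattice A := by
  have hS' : ∀ X ∈ S, ∃ B ⊆ A, X = sInf B := hS
  choose! B hBA hB using hS'
  refine ⟨⋃₀ (B '' S), Set.sUnion_subset (Set.forall_mem_image.2 hBA), ?_⟩
  rw [sInf_sUnion, iInf_image, sInf_eq_iInf]
  exact iInf_congr fun X ↦ iInf_congr (hB X)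

instance (A : Set (Submodule 𝕂 V)) : OrderTop (interLattice A) :=
  Subtype.orderTop (top_mem_interLattice A)

lemma isCoatom_interLattice_iff (hA : IsArrangement A) (x : interLattice A) :
    IsCoatom x ↔ (x : Submodule 𝕂 V) ∈ A := by
  refine ⟨fun hx ↦ ?_, fun hx ↦ ?_⟩
  · obtain ⟨S, hSA, hxS⟩ := x.2
    obtain rfl | ⟨H, hH⟩ := S.eq_empty_or_nonempty
    · exact absurd (Subtype.ext (hxS.trans sInf_empty)) hx.1
    have hxH : x ≤ ⟨H, subset_interLattice A (hSA hH)⟩ := hxS.trans_le (sInf_le hH)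
    rcases hx.le_iff.1 hxH with hHtop | hHx
    · exact absurd (congrArg Subtype.val hHtop) (hA.2 H (hSA hH)).isCoatom.1
    · rw [← hHx]
      exact hSA hH
  · have hcoatom := (hA.2 _ hx).isCoatom
    exact ⟨fun htop ↦ hcoatom.1 (congrArg Subtype.val htop),
      fun y hy ↦ Subtype.ext (hcoatom.2 y.1 hy)⟩

lemma isGLB_sInf_image_val (T : Set (interLattice A)) :
    IsGLB T ⟨sInf (Subtype.val '' T),
      sInf_mem_interLattice ((Set.image_subset_range _ _).trans Subtype.range_coe.subset)⟩ :=
  ⟨fun _ hx ↦ Subtype.mk_le_mk.2 (sInf_le (Set.mem_image_of_mem _ hx)),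
    fun _ hy ↦ Subtype.mk_le_mk.2 (le_sInf (Set.forall_mem_image.2 fun _ hx ↦ hy hx))⟩

variable (e : interLattice A ≃o interLattice C)

def isoImage (S : Set (Submodule 𝕂 V)) : Set (Submodule 𝕂' V') :=
  Subtype.val '' (e '' (Subtype.val ⁻¹' S))

lemma coe_apply_mem_isoImage {S : Set (Submodule 𝕂 V)} {x : interLattice A}
    (hx : (x : Submodule 𝕂 V) ∈ S) : (e x : Submodule 𝕂' V') ∈ isoImage e S :=
  ⟨e x, ⟨x, hx, rfl⟩, rfl⟩

lemma isoImage_mono {S T : Set (Submodule 𝕂 V)} (hST : S ⊆ T) :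
    isoImage e S ⊆ isoImage e T :=
  Set.image_mono (Set.image_mono (Set.preimage_mono hST))

lemma isoImage_symm_isoImage {S : Set (Submodule 𝕂 V)} (hS : S ⊆ interLattice A) :
    isoImage e.symm (isoImage e S) = S := by
  rw [isoImage, isoImage, Subtype.val_injective.preimage_image, e.symm_image_image,
    Subtype.image_preimage_coe, Set.inter_eq_right.2 hS]

lemma isoImage_sdiff_singleton (S : Set (Submodule 𝕂 V)) (x : interLattice A) :
    isoImage e (S \ {(x : Submodule 𝕂 V)}) = isoImage e S \ {(e x : Submodule 𝕂' V')} := by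
  have hx : (Subtype.val ⁻¹' {(x : Submodule 𝕂 V)} : Set (interLattice A)) = {x} :=
    Set.ext fun _ ↦ Subtype.ext_iff.symm
  simp only [isoImage, Set.preimage_sdiff, hx, Set.image_sdiff e.injective,
    Set.image_sdiff Subtype.val_injective, Set.image_singleton]

lemma isoImage_subset (hA : IsArrangement A) (hC : IsArrangement C) {S : Set (Submodule 𝕂 V)}
    (hSA : S ⊆ A) : isoImage e S ⊆ C := by
  rintro _ ⟨_, ⟨x, hx, rfl⟩, rfl⟩
  rw [← isCoatom_interLattice_iff hC, e.isCoatom_iff, isCoatom_interLattice_iff hA]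
  exact hSA hx

lemma isoImage_eq (hA : IsArrangement A) (hC : IsArrangement C) : isoImage e A = C := by
  refine (isoImage_subset e hA hC subset_rfl).antisymm ?_
  conv_lhs => rw [← isoImage_symm_isoImage e.symm (subset_interLattice C)]
  exact isoImage_mono e (isoImage_subset e.symm hC hA subset_rfl)

lemma coe_apply_sInf {S : Set (Submodule 𝕂 V)} (hS : S ⊆ interLattice A) :
    (e ⟨sInf S, sInf_mem_interLattice hS⟩ : Submodule 𝕂' V') = sInf (isoImage e S) := by
  have hval : Subtype.val '' (Subtype.val ⁻¹' S : Set (interLattice A)) = S := by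
    simpa using hS
  have hglb := isGLB_sInf_image_val (Subtype.val ⁻¹' S : Set (interLattice A))
  simp only [hval] at hglb
  exact congrArg Subtype.val ((e.isGLB_image'.2 hglb).unique (isGLB_sInf_image_val _))

lemma sInf_isoImage_le_iff {S : Set (Submodule 𝕂 V)} (hS : S ⊆ interLattice A)
    (x : interLattice A) : sInf (isoImage e S) ≤ e x ↔ sInf S ≤ x := by
  rw [← coe_apply_sInf e hS, Subtype.coe_le_coe, e.le_iff_le, ← Subtype.coe_le_coe]

lemma IsIndependent.isoImage {S : Set (Submodule 𝕂 V)} (hS : IsIndependent S)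
    (hSA : S ⊆ interLattice A) : IsIndependent (isoImage e S) := by
  rintro _ ⟨_, ⟨x, hx, rfl⟩, rfl⟩ hle
  rw [← isoImage_sdiff_singleton, sInf_isoImage_le_iff e (Set.sdiff_subset.trans hSA)] at hle
  exact hS x hx hle

lemma IsLineClosed.isoImage (hA : IsArrangement A) (hC : IsArrangement C)
    {T : Set (Submodule 𝕂 V)} (hT : IsLineClosed A T) : IsLineClosed C (isoImage e T) := by
  refine ⟨isoImage_subset e hA hC hT.1, ?_⟩
  rintro _ ⟨_, ⟨x, hx, rfl⟩, rfl⟩ _ ⟨_, ⟨y, hy, rfl⟩, rfl⟩ K ⟨hKC, hle⟩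
  obtain ⟨_, ⟨z, hz, rfl⟩, rfl⟩ := (isoImage_eq e hA hC).symm.subset hKC
  have hpair : ({x.1, y.1} : Set (Submodule 𝕂 V)) ⊆ interLattice A :=
    Set.insert_subset x.2 (Set.singleton_subset_iff.2 y.2)
  refine coe_apply_mem_isoImage e
    (hT.2 x hx y hy ⟨hz, sInf_pair.symm.trans_le ((sInf_isoImage_le_iff e hpair z).1 ?_)⟩)
  exact (le_inf (sInf_le (coe_apply_mem_isoImage e (Or.inl rfl)))
    (sInf_le (coe_apply_mem_isoImage e (Or.inr rfl)))).trans hle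

lemma lineClosure_isoImage_eq (hA : IsArrangement A) (hC : IsArrangement C)
    {B : Set (Submodule 𝕂 V)} (hBA : B ⊆ A) (hlc : lineClosure A B = A) :
    lineClosure C (isoImage e B) = C := by
  refine (lineClosure_subset (isLineClosed_self C) (isoImage_subset e hA hC hBA)).antisymm
    fun K hK T ⟨hT, hBT⟩ ↦ ?_
  have hBT' : B ⊆ isoImage e.symm T :=
    (isoImage_symm_isoImage e (hBA.trans (subset_interLattice A))).symm.subset.trans
      (isoImage_mono e.symm hBT)
  have hAT : A ⊆ isoImage e.symm T :=
    hlc.symm.subset.trans (lineClosure_subset (hT.isoImage e.symm hC hA) hBT')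
  rw [← isoImage_eq e hA hC] at hK
  exact isoImage_symm_isoImage e.symm (hT.1.trans (subset_interLattice C)) ▸
    isoImage_mono e hAT hK

end Transfer

end

theorem lc_basis_implies_combinatorially_formal_general {𝕂 : Type*} [Field 𝕂] {ℓ : ℕ}
    (A : Set (Submodule 𝕂 (Fin ℓ → 𝕂))) (hA : IsArrangement A)
    (r : ℕ)
    (B : Set (Submodule 𝕂 (Fin ℓ → 𝕂))) (hBA : B ⊆ A)
    (hcard : B.ncard = r) (hrkB : rk (sInf B) = r) (hlc : lineClosure A B = A) :
    IsCombinatoriallyFormal A := by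
  intro 𝕂' _ ℓ' C hC ⟨e⟩
  have hB : IsIndependent B := isIndependent_of_rk_sInf_eq_ncard (hA.1.subset hBA)
    (fun H hH ↦ hA.2 H (hBA hH)) (hrkB.trans hcard.symm)
  exact (hB.isoImage e (hBA.trans (subset_interLattice A))).isFormal_of_lineClosure_eq
    (isoImage_subset e hA hC hBA) (lineClosure_isoImage_eq e hA hC hBA hlc)

/-- **Proposition 2.4** (`prop:lcbasis`, Falk): let `A` be a central arrangement of rank `r`
and suppose `B ⊆ A` consists of exactly `r` hyperplanes with `r(∩_{H ∈ B} H) = r` and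
`lc(B) = A` (an lc-basis).  Then `A` is combinatorially formal. -/
theorem lc_basis_implies_combinatorially_formal {𝕂 : Type*} [Field 𝕂] {ℓ : ℕ}
    (A : Set (Submodule 𝕂 (Fin ℓ → 𝕂))) (hA : IsArrangement A)
    (r : ℕ) (hr : rk (sInf A) = r)
    (B : Set (Submodule 𝕂 (Fin ℓ → 𝕂))) (hBA : B ⊆ A)
    (hcard : B.ncard = r) (hrkB : rk (sInf B) = r) (hlc : lineClosure A B = A) :
    IsCombinatoriallyFormal A :=
  lc_basis_implies_combinatorially_formal_general A hA r B hBA hcard hrkB hlc
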